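/- arXiv:1706.03002 — 4 statements merged into one kernel-verified Lean document; each statement's English description precedes it below -/
import Mathlib

section
/- For any completely multiplicative function f : ℕ → ℝ with values in [-1,1] and any x ≥ 2, one has ∑_{n ≤ x} f(n)/n = (1/x) ∑_{n ≤ x} (1*f)(n) + O(1), where 1*f denotes the Dirichlet convolution of the constant function 1 with f, and the implied constant is absolute. -/
/-!
Swapping the order of summation, `∑_{n ≤ x} (1*f)(n) = ∑_{d ≤ x} f(d) ⌊x/d⌋`, so the difference
in question is `∑_{d ≤ x} f(d) (x/d - ⌊x/d⌋) / x`. Each of its at most `x` terms has absolute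
value at most `1/x`, since `|f| ≤ 1` and `0 ≤ y - ⌊y⌋ < 1`; hence the constant `1` works.
-/

open Finset

theorem Nat.sum_Icc_sum_divisors_eq_sum_nsmul {M : Type*} [AddCommMonoid M] (f : ℕ → M)
    (N : ℕ) :
    ∑ n ∈ Icc 1 N, ∑ d ∈ n.divisors, f d = ∑ d ∈ Icc 1 N, (N / d) • f d := by
  rw [sum_comm' (t' := Icc 1 N) (s' := fun d ↦ {n ∈ Ioc 0 N | d ∣ n})]
  · simp_rw [sum_const, Nat.Ioc_filter_dvd_card_eq_div]
  · intro n d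
    simp only [mem_Icc, Nat.mem_divisors, mem_filter, mem_Ioc]
    constructor
    · rintro ⟨⟨hn, hnN⟩, hdn, -⟩
      exact ⟨⟨⟨hn, hnN⟩, hdn⟩, Nat.pos_of_dvd_of_pos hdn hn, (Nat.le_of_dvd hn hdn).trans hnN⟩
    · rintro ⟨⟨⟨hn, hnN⟩, hdn⟩, -⟩
      exact ⟨⟨hn, hnN⟩, hdn, hn.ne'⟩

theorem abs_one_div_sub_floor_div_div_le {x : ℝ} (hx : 0 < x) (d : ℕ) :
    |1 / d - ⌊x / d⌋₊ / x| ≤ 1 / x := by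
  set y := x / d
  have hy : 0 ≤ y := by positivity
  have hsplit : 1 / (d : ℝ) - ⌊y⌋₊ / x = (y - ⌊y⌋₊) / x := by
    simp only [y]
    field_simp
  rw [hsplit, abs_div, abs_of_pos hx]
  gcongr
  rw [abs_le]
  constructor <;> linarith [Nat.floor_le hy, Nat.lt_floor_add_one y]

/-- For any completely multiplicative `f : ℕ → ℝ` with values in `[-1,1]`
and any `x ≥ 2`, `∑_{n ≤ x} f(n)/n = (1/x) ∑_{n ≤ x} (1*f)(n) + O(1)` with an absolute
implied constant, where `(1*f)(n) = ∑_{d ∣ n} f(d)` is the Dirichlet convolution. -/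
theorem logSum_eq_convolution_mean_add_O1 :
    ∃ C : ℝ, 0 < C ∧ ∀ f : ℕ → ℝ,
      f 1 = 1 → (∀ m n : ℕ, f (m * n) = f m * f n) →
      (∀ n : ℕ, f n ∈ Set.Icc (-1 : ℝ) 1) →
      ∀ x : ℝ, 2 ≤ x →
        |(∑ n ∈ Finset.Icc 1 ⌊x⌋₊, f n / (n : ℝ)) -
          (1 / x) * ∑ n ∈ Finset.Icc 1 ⌊x⌋₊, ∑ d ∈ n.divisors, f d| ≤ C := by
  refine ⟨1, one_pos, fun f _ _ hf x hx => ?_⟩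
  have hx0 : 0 < x := by linarith
  have hterm (d : ℕ) : |f d / d - 1 / x * ((⌊x⌋₊ / d) • f d)| ≤ 1 / x := by
    have hfd : |f d| ≤ 1 := abs_le.mpr (hf d)
    rw [nsmul_eq_mul, ← Nat.floor_div_natCast,
      show f d / d - 1 / x * (⌊x / d⌋₊ * f d) = f d * (1 / d - ⌊x / d⌋₊ / x) by ring, abs_mul]
    simpa using mul_le_mul hfd (abs_one_div_sub_floor_div_div_le hx0 d) (abs_nonneg _) zero_le_one
  rw [Nat.sum_Icc_sum_divisors_eq_sum_nsmul, mul_sum, ← sum_sub_distrib]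
  calc _ ≤ ∑ d ∈ Icc 1 ⌊x⌋₊, 1 / x := (abs_sum_le_sum_abs _ _).trans (sum_le_sum fun d _ ↦ hterm d)
    _ = ⌊x⌋₊ / x := by simp [div_eq_mul_inv]
    _ ≤ 1 := div_le_one_of_le₀ (Nat.floor_le hx0.le) hx0.le
end

section
/- For any multiplicative function f : ℕ → [0,1] and any x ≥ 2, the logarithmic mean satisfies L_f(x) ≫ M_f(x), i.e., (1/log x) ∑_{n ≤ x} f(n)/n ≥ C · (1/x) ∑_{n ≤ x} f(n) for some absolute constant C > 0. -/
/-!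
Write `n = ∏ p^{v_p(n)}`. Since `f` is multiplicative with values in `[0,1]`, each term of
`f(n) log n = ∑_p f(n) log p^{v_p(n)}` is at most `f(n / p^{v_p(n)}) log p^{v_p(n)}`, and the pair
`(n / p^{v_p(n)}, p^{v_p(n)})` determines `(n, p)`. Hence `∑_{n ≤ x} f(n) log n` is at most
`∑_{m ≤ x} f(m) ∑_{q ≤ x/m} log q` over prime powers `q`, and Chebyshev's bound
`∑_{q ≤ y} log q ≪ y` makes this `≪ x ∑_{m ≤ x} f(m)/m`. On the other hand
`∑_{n ≤ x} f(n) (log x - log n) ≤ ∑_{n ≤ x} log (x/n) ≤ x` by Stirling, and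
`∑_{n ≤ x} f(n)/n ≥ f(1) = 1`. Adding the two bounds gives
`log x ∑_{n ≤ x} f(n) ≪ x ∑_{n ≤ x} f(n)/n`.
-/

open Finset Real Chebyshev
open ArithmeticFunction hiding log

theorem log_sq_le_sixteen_mul_sqrt {y : ℝ} (hy : 1 ≤ y) : log y ^ 2 ≤ 16 * √y := by
  have h := log_le_rpow_div (x := y) (ε := 1 / 4) (by linarith) (by norm_num)
  have hsq : (y ^ (1 / 4 : ℝ)) ^ 2 = √y := by
    rw [sqrt_eq_rpow, ← rpow_mul_natCast (by linarith)]; norm_num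
  nlinarith [pow_le_pow_left₀ (log_nonneg hy) h 2]

theorem log_le_log_div_log_two_mul_vonMangoldt {q : ℕ} (hq : IsPrimePow q) {y : ℝ}
    (hqy : (q : ℝ) ≤ y) : log q ≤ log y / log 2 * Λ q := by
  have hlogq : log q ≤ log y := log_le_log (by exact_mod_cast hq.pos) hqy
  have hlogp : log 2 ≤ Λ q := by
    rw [vonMangoldt_apply, if_pos hq]
    exact log_le_log two_pos (mod_cast (Nat.minFac_prime hq.ne_one).two_le)
  have hlog2 : 0 < log 2 := log_pos one_lt_two
  calc log q ≤ log y / log 2 * log 2 := by rwa [div_mul_cancel₀ _ hlog2.ne']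
    _ ≤ log y / log 2 * Λ q := by
      gcongr
      exact div_nonneg ((log_nonneg (mod_cast hq.one_lt.le)).trans hlogq) hlog2.le

theorem sum_log_primePow_le_theta_add {y : ℝ} (hy : 0 ≤ y) :
    ∑ q ∈ Ioc 0 ⌊y⌋₊ with IsPrimePow q, log q ≤ θ y + log y / log 2 * (ψ y - θ y) := by
  rw [← sum_filter_add_sum_filter_not _ Nat.Prime, filter_filter, filter_filter,
    psi_sub_theta_eq_sum_not_prime, mul_sum]
  gcongr ?_ + ?_
  · rw [theta]
    exact (sum_congr (filter_congr fun q _ => ⟨And.right, fun hq => ⟨hq.isPrimePow, hq⟩⟩)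
      fun _ _ => rfl).le
  · rw [sum_filter, sum_filter]
    gcongr with q hq
    have hqy : (q : ℝ) ≤ y := (Nat.cast_le.2 (mem_Ioc.1 hq).2).trans (Nat.floor_le hy)
    by_cases hp : q.Prime
    · simp [hp]
    simp only [hp, not_false_eq_true, and_true, if_true]
    split_ifs with hpp
    · exact log_le_log_div_log_two_mul_vonMangoldt hpp hqy
    · have hy1 : (1 : ℝ) ≤ y := (Nat.one_le_cast.2 (mem_Ioc.1 hq).1).trans hqy
      exact mul_nonneg (div_nonneg (log_nonneg hy1) (log_pos one_lt_two).le) vonMangoldt_nonneg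

theorem sum_log_primePow_le {y : ℝ} (hy : 0 ≤ y) :
    ∑ q ∈ Ioc 0 ⌊y⌋₊ with IsPrimePow q, log q ≤ 48 * y := by
  rcases lt_or_ge y 1 with hy1 | hy1
  · simp [Nat.floor_eq_zero.2 hy1, hy]
  have hlog2 : 0 < log 2 := log_pos one_lt_two
  have hψθ : log y / log 2 * (ψ y - θ y) ≤ 32 / log 2 * y := by
    calc log y / log 2 * (ψ y - θ y) ≤ log y / log 2 * (2 * √y * log y) := by
          gcongr
          · exact div_nonneg (log_nonneg hy1) hlog2.le
          · exact psi_sub_theta_le hy1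
      _ = 2 / log 2 * √y * log y ^ 2 := by ring
      _ ≤ 2 / log 2 * √y * (16 * √y) := by gcongr; exact log_sq_le_sixteen_mul_sqrt hy1
      _ = 32 / log 2 * (√y * √y) := by ring
      _ = 32 / log 2 * y := by rw [mul_self_sqrt hy]
  have hconst : log 4 + 32 / log 2 ≤ 48 := by
    have hlog4 : log 4 = 2 * log 2 := by
      rw [show (4 : ℝ) = 2 ^ 2 by norm_num, log_pow, Nat.cast_ofNat]
    rw [hlog4, ← le_sub_iff_add_le', div_le_iff₀ hlog2]
    nlinarith [log_two_gt_d9, log_two_lt_d9]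
  calc _ ≤ θ y + log y / log 2 * (ψ y - θ y) := sum_log_primePow_le_theta_add hy
    _ ≤ log 4 * y + 32 / log 2 * y := add_le_add (theta_le_log4_mul_x hy) hψθ
    _ = (log 4 + 32 / log 2) * y := by ring
    _ ≤ 48 * y := by gcongr

theorem log_eq_sum_log_ordProj {n : ℕ} (hn : n ≠ 0) :
    log n = ∑ p ∈ n.primeFactors, log (ordProj[p] n : ℕ) := by
  conv_lhs => rw [Nat.prod_primeFactors_pow_factorization hn]
  rw [Nat.cast_prod, Real.log_prod]
  exact fun p hp => by exact_mod_cast (pow_pos (Nat.prime_of_mem_primeFactors hp).pos _).ne'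

theorem factorization_ne_zero_of_mem_primeFactors {n p : ℕ} (hp : p ∈ n.primeFactors) :
    n.factorization p ≠ 0 :=
  Finsupp.mem_support_iff.1 hp

theorem eq_of_ordProj_eq_of_ordCompl_eq {n₁ n₂ p₁ p₂ : ℕ} (hp₁ : p₁ ∈ n₁.primeFactors)
    (hp₂ : p₂ ∈ n₂.primeFactors) (hproj : ordProj[p₁] n₁ = ordProj[p₂] n₂)
    (hcompl : ordCompl[p₁] n₁ = ordCompl[p₂] n₂) : n₁ = n₂ ∧ p₁ = p₂ := by
  refine ⟨?_, ?_⟩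
  · calc n₁ = ordProj[p₁] n₁ * ordCompl[p₁] n₁ := (Nat.ordProj_mul_ordCompl_eq_self n₁ p₁).symm
      _ = n₂ := by rw [hcompl, hproj, Nat.ordProj_mul_ordCompl_eq_self]
  · have hk₁ := factorization_ne_zero_of_mem_primeFactors hp₁
    have hk₂ := factorization_ne_zero_of_mem_primeFactors hp₂
    rw [← (Nat.prime_of_mem_primeFactors hp₁).pow_minFac hk₁,
      ← (Nat.prime_of_mem_primeFactors hp₂).pow_minFac hk₂, hproj]

section Multiplicative

variable {f : ℕ → ℝ}

theorem apply_le_apply_ordCompl (hmul : ∀ m n, Nat.Coprime m n → f (m * n) = f m * f n)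
    (hf_nonneg : ∀ n, 0 ≤ f n) (hf_le_one : ∀ n, f n ≤ 1) {n p : ℕ} (hp : p.Prime) (hn : n ≠ 0) :
    f n ≤ f (ordCompl[p] n) := by
  have hcop : Nat.Coprime (ordProj[p] n) (ordCompl[p] n) :=
    (Nat.coprime_ordCompl hp hn).pow_left _
  calc f n = f (ordProj[p] n) * f (ordCompl[p] n) := by
        rw [← hmul _ _ hcop, Nat.ordProj_mul_ordCompl_eq_self]
    _ ≤ 1 * f (ordCompl[p] n) := by gcongr; exacts [hf_nonneg _, hf_le_one _]
    _ = f (ordCompl[p] n) := one_mul _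

theorem sum_mul_log_le_sum_mul_sum_log_primePow
    (hmul : ∀ m n, Nat.Coprime m n → f (m * n) = f m * f n)
    (hf_nonneg : ∀ n, 0 ≤ f n) (hf_le_one : ∀ n, f n ≤ 1) (N : ℕ) :
    ∑ n ∈ Icc 1 N, f n * log n ≤
      ∑ m ∈ Icc 1 N, f m * ∑ q ∈ Ioc 0 (N / m) with IsPrimePow q, log q := by
  set s := (Icc 1 N).sigma fun n => n.primeFactors
  set e : (Σ _ : ℕ, ℕ) → (Σ _ : ℕ, ℕ) := fun σ => ⟨ordCompl[σ.2] σ.1, ordProj[σ.2] σ.1⟩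
  have he : Set.InjOn e s := by
    rintro ⟨n₁, p₁⟩ h₁ ⟨n₂, p₂⟩ h₂ heq
    obtain ⟨rfl, rfl⟩ := eq_of_ordProj_eq_of_ordCompl_eq (mem_sigma.1 h₁).2 (mem_sigma.1 h₂).2
      (congr_arg Sigma.snd heq) (congr_arg Sigma.fst heq)
    rfl
  have hes : s.image e ⊆ (Icc 1 N).sigma fun m => (Ioc 0 (N / m)).filter IsPrimePow := by
    simp only [s, e, subset_iff, mem_image, mem_sigma, mem_Icc, mem_filter, mem_Ioc]
    rintro _ ⟨⟨n, p⟩, ⟨⟨hn1, hnN⟩, hp⟩, rfl⟩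
    have hcompl := Nat.ordCompl_pos p (Nat.one_le_iff_ne_zero.1 hn1)
    refine ⟨⟨hcompl, (Nat.ordCompl_le n p).trans hnN⟩, ⟨Nat.ordProj_pos n p, ?_⟩, ?_⟩
    · rwa [Nat.le_div_iff_mul_le hcompl, Nat.ordProj_mul_ordCompl_eq_self]
    · exact (Nat.prime_of_mem_primeFactors hp).isPrimePow.pow
        (factorization_ne_zero_of_mem_primeFactors hp)
  calc ∑ n ∈ Icc 1 N, f n * log n
      = ∑ σ ∈ s, f σ.1 * log (ordProj[σ.2] σ.1 : ℕ) := by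
        rw [sum_sigma]
        refine sum_congr rfl fun n hn => ?_
        rw [log_eq_sum_log_ordProj (by simp at hn; omega), mul_sum]
    _ ≤ ∑ σ ∈ s, f (e σ).1 * log (e σ).2 := by
        gcongr with σ hσ
        have hp := (mem_sigma.1 hσ).2
        exact apply_le_apply_ordCompl hmul hf_nonneg hf_le_one
          (Nat.prime_of_mem_primeFactors hp) (Nat.mem_primeFactors.1 hp).2.2
    _ = ∑ τ ∈ s.image e, f τ.1 * log τ.2 := (sum_image (f := fun τ => f τ.1 * log τ.2) he).symm
    _ ≤ ∑ τ ∈ (Icc 1 N).sigma fun m => (Ioc 0 (N / m)).filter IsPrimePow, f τ.1 * log τ.2 :=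
        sum_le_sum_of_subset_of_nonneg hes fun τ _ _ =>
          mul_nonneg (hf_nonneg _) (log_natCast_nonneg _)
    _ = _ := by rw [sum_sigma]; simp_rw [mul_sum]

theorem sum_mul_log_le (hmul : ∀ m n, Nat.Coprime m n → f (m * n) = f m * f n)
    (hf_nonneg : ∀ n, 0 ≤ f n) (hf_le_one : ∀ n, f n ≤ 1) {x : ℝ} (hx : 0 ≤ x) :
    ∑ n ∈ Icc 1 ⌊x⌋₊, f n * log n ≤ 48 * x * ∑ n ∈ Icc 1 ⌊x⌋₊, f n / n := by
  refine (sum_mul_log_le_sum_mul_sum_log_primePow hmul hf_nonneg hf_le_one _).trans ?_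
  rw [mul_sum]
  refine sum_le_sum fun m _ => ?_
  calc f m * ∑ q ∈ Ioc 0 (⌊x⌋₊ / m) with IsPrimePow q, log q ≤ f m * (48 * (x / m)) := by
        rw [← Nat.floor_div_natCast]
        exact mul_le_mul_of_nonneg_left (sum_log_primePow_le (by positivity)) (hf_nonneg m)
    _ = 48 * x * (f m / m) := by ring

theorem sum_log_natCast_Icc_eq_log_factorial (N : ℕ) :
    ∑ n ∈ Icc 1 N, log n = log N.factorial := by
  rw [← Ico_add_one_right_eq_Icc, ← prod_Ico_id_eq_factorial, Nat.cast_prod, log_prod]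
  exact fun n hn => Nat.cast_ne_zero.2 (by simp at hn; omega)

theorem sum_log_sub_log_le {x : ℝ} (hx : 0 ≤ x) : ∑ n ∈ Icc 1 ⌊x⌋₊, (log x - log n) ≤ x := by
  set N := ⌊x⌋₊
  rcases Nat.eq_zero_or_pos N with hN | hN
  · simp [hN, hx]
  have hN0 : (0 : ℝ) < N := by exact_mod_cast hN
  have hx0 : 0 < x := hN0.trans_le (Nat.floor_le hx)
  have hstirling : N * log N - N ≤ log N.factorial := by
    have := Stirling.le_log_factorial_stirling hN.ne'
    have : 0 ≤ log N := log_natCast_nonneg N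
    have : 0 ≤ log (2 * π) := log_nonneg (by linarith [pi_gt_three])
    linarith
  have hlog : log (x / N) ≤ x / N - 1 := log_le_sub_one_of_pos (by positivity)
  rw [log_div hx0.ne' hN0.ne'] at hlog
  calc ∑ n ∈ Icc 1 N, (log x - log n) = N * log x - log N.factorial := by
        rw [sum_sub_distrib, sum_const, Nat.card_Icc, sum_log_natCast_Icc_eq_log_factorial,
          nsmul_eq_mul, Nat.add_sub_cancel]
    _ ≤ N * (log x - log N) + N := by linarith
    _ ≤ N * (x / N - 1) + N := by gcongr
    _ = x := by field_simp; ring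

theorem sum_mul_log_sub_log_le (hf_le_one : ∀ n, f n ≤ 1) {x : ℝ} (hx : 0 ≤ x) :
    ∑ n ∈ Icc 1 ⌊x⌋₊, f n * (log x - log n) ≤ x := by
  refine le_trans (sum_le_sum fun n hn => ?_) (sum_log_sub_log_le hx)
  have hn := mem_Icc.1 hn
  have hlog : log n ≤ log x := log_le_log (by exact_mod_cast hn.1)
    ((Nat.cast_le.2 hn.2).trans (Nat.floor_le hx))
  exact mul_le_of_le_one_left (sub_nonneg.2 hlog) (hf_le_one n)

theorem sum_mul_log_le_mul_sum_div (hf_one : f 1 = 1)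
    (hmul : ∀ m n, Nat.Coprime m n → f (m * n) = f m * f n)
    (hf_nonneg : ∀ n, 0 ≤ f n) (hf_le_one : ∀ n, f n ≤ 1) {x : ℝ} (hx : 1 ≤ x) :
    (∑ n ∈ Icc 1 ⌊x⌋₊, f n) * log x ≤ 49 * x * ∑ n ∈ Icc 1 ⌊x⌋₊, f n / n := by
  have hT : 1 ≤ ∑ n ∈ Icc 1 ⌊x⌋₊, f n / n := by
    have h1 : 1 ∈ Icc 1 ⌊x⌋₊ := mem_Icc.2 ⟨le_rfl, Nat.one_le_floor_iff x |>.2 hx⟩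
    simpa [hf_one] using single_le_sum (fun n _ => div_nonneg (hf_nonneg n) n.cast_nonneg) h1
  have hx0 : 0 ≤ x := by linarith
  calc (∑ n ∈ Icc 1 ⌊x⌋₊, f n) * log x
      = ∑ n ∈ Icc 1 ⌊x⌋₊, f n * log n + ∑ n ∈ Icc 1 ⌊x⌋₊, f n * (log x - log n) := by
        rw [sum_mul, ← sum_add_distrib]
        exact sum_congr rfl fun n _ => by ring
    _ ≤ 48 * x * ∑ n ∈ Icc 1 ⌊x⌋₊, f n / n + x * ∑ n ∈ Icc 1 ⌊x⌋₊, f n / n :=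
        add_le_add (sum_mul_log_le hmul hf_nonneg hf_le_one hx0)
          ((sum_mul_log_sub_log_le hf_le_one hx0).trans (le_mul_of_one_le_right hx0 hT))
    _ = 49 * x * ∑ n ∈ Icc 1 ⌊x⌋₊, f n / n := by ring

end Multiplicative

/-- **Halberstam–Richert consequence.** For any multiplicative `f : ℕ → [0,1]`
and any `x ≥ 2`, `L_f(x) ≥ C · M_f(x)` for an absolute constant `C > 0`. -/
theorem logMean_gg_mean_of_nonneg :
    ∃ C : ℝ, 0 < C ∧ ∀ f : ℕ → ℝ,
      f 1 = 1 → (∀ m n : ℕ, Nat.Coprime m n → f (m * n) = f m * f n) →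
      (∀ n : ℕ, f n ∈ Set.Icc (0 : ℝ) 1) →
      ∀ x : ℝ, 2 ≤ x →
        (1 / Real.log x) * ∑ n ∈ Finset.Icc 1 ⌊x⌋₊, f n / (n : ℝ) ≥
          C * ((1 / x) * ∑ n ∈ Finset.Icc 1 ⌊x⌋₊, f n) := by
  refine ⟨1 / 49, by norm_num, fun f hf_one hmul hf x hx => ?_⟩
  have hkey := sum_mul_log_le_mul_sum_div hf_one hmul (fun n => (hf n).1) (fun n => (hf n).2)
    (by linarith : (1 : ℝ) ≤ x)
  have hlog : 0 < log x := log_pos (by linarith)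
  have hx0 : 0 < x := by linarith
  rw [ge_iff_le, show 1 / 49 * (1 / x * ∑ n ∈ Icc 1 ⌊x⌋₊, f n) =
      (∑ n ∈ Icc 1 ⌊x⌋₊, f n) / (49 * x) by field_simp, one_div_mul_eq_div,
    div_le_div_iff₀ (by positivity) hlog]
  linarith
end

section
/- Assume: (i) for every even primitive quadratic Dirichlet character χ mod q, max_{t ≤ q} |∑_{n ≤ t} χ(n)| = o(√q log q) as q → ∞; (ii) Lemma B (the mean-to-logarithmic-mean implication for completely multiplicative f : ℕ → [-1,1]); (iii) the lower bound of Lemma 2.1 relating character sums of χ = ξψ to partial logarithmic sums of ξ. Then for every ε > 0 and every c > 0, for all sufficiently large primes p, every odd primitive quadratic character ξ mod p satisfies |∑_{n ≤ t} ξ(n)| < c·t for all t > p^ε. -/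
/-!
If `|S_ξ(t)| ≥ c t` with `t > p ^ ε`, then `T = ⌊t⌋ mod p < p` satisfies `T ≥ c t > c p ^ ε`
and `|S_ξ(T)| ≥ c T`, so Lemma B makes `∑_{n ≤ T} ξ(n)/n ≥ δ log T ≥ δ ε log p + O(1)`.
Since `ξ(2m)/(2m) = (ξ(2)/2) · ξ(m)/m`, peeling off the even `n` dyadically bounds every such
logarithmic sum by twice the largest one over odd `n`. Lemma 2.1 with `ψ = χ₄` (where
`√4 / (π φ(4)) = 1/π`) bounds that maximum by `π (C + max_N |S_{ξχ₄}(N)| / √(4p))`, and `ξχ₄`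
is an even primitive quadratic character mod `4p`, so hypothesis (i) makes this `o(log p)`.
-/

open DirichletCharacter Finset Filter Real

theorem Function.Periodic.sum_range_mod {M : Type*} [AddCommMonoid M] {f : ℕ → M} {p : ℕ}
    (hf : Function.Periodic f p) (hsum : ∑ n ∈ range p, f n = 0) (m : ℕ) :
    ∑ n ∈ range m, f n = ∑ n ∈ range (m % p), f n := by
  have hstep (a : ℕ) : ∑ n ∈ range (p + a), f n = ∑ n ∈ range a, f n := by
    rw [sum_range_add, hsum, zero_add]
    exact sum_congr rfl fun n _ ↦ by rw [add_comm, hf]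
  have hmul (r j : ℕ) : ∑ n ∈ range (r + p * j), f n = ∑ n ∈ range r, f n := by
    induction j with
    | zero => simp
    | succ j ih => rw [mul_add_one, ← add_assoc, add_comm _ p, hstep, ih]
  conv_lhs => rw [← Nat.mod_add_div m p]
  exact hmul _ _

theorem ZMod.sum_range_natCast {M : Type*} [AddCommMonoid M] (q : ℕ) [NeZero q]
    (F : ZMod q → M) : ∑ n ∈ range q, F n = ∑ x, F x := by
  obtain ⟨q, rfl⟩ : ∃ r, q = r + 1 := Nat.exists_eq_succ_of_ne_zero (NeZero.ne q)
  rw [Finset.sum_range]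
  exact Fintype.sum_congr _ _ fun i ↦ congrArg F (Fin.cast_val_eq_self i)

theorem Finset.le_ciSup_of_mem {ι α : Type*} [ConditionallyCompleteLinearOrder α] {s : Finset ι}
    {f : ι → α} {i : ι} (hi : i ∈ s) (hf : sSup ∅ ≤ f i) : f i ≤ ⨆ j ∈ s, f j := by
  rw [s.ciSup_eq_max'_image f ⟨i, hi, hf⟩ (image_nonempty.mpr ⟨i, hi⟩)]
  exact le_max' _ _ (mem_image_of_mem f hi)

theorem log_add_mul_log_le_log {c x y ε : ℝ} (hc : 0 < c) (hx : 0 < x)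
    (h : c * x ^ ε ≤ y) : log c + ε * log x ≤ log y := by
  have hxε := rpow_pos_of_pos hx ε
  rw [← log_rpow hx, ← log_mul hc.ne' hxε.ne']
  exact log_le_log (by positivity) h

theorem log_mul_le_two_mul_log {a x : ℝ} (ha : 0 < a) (hax : a ≤ x) :
    log (x * a) ≤ 2 * log x := by
  have hx := ha.trans_le hax
  rw [two_mul, ← log_mul hx.ne' hx.ne']
  exact log_le_log (by positivity) (mul_le_mul_of_nonneg_left hax hx.le)

namespace DirichletCharacter

section CommMonoidWithZero

variable {R : Type*} [CommMonoidWithZero R] {k l : ℕ}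

lemma changeLevel_apply_natCast_of_coprime {m : ℕ} (h : k ∣ m) (χ : DirichletCharacter R k)
    {a : ℕ} (ha : a.Coprime m) : changeLevel h χ a = χ a := by
  simpa using changeLevel_eq_cast_of_dvd' χ h (a := a) (Nat.isCoprime_iff_coprime.mpr ha)

lemma changeLevel_apply_neg_one {m : ℕ} (h : k ∣ m) (χ : DirichletCharacter R k) :
    changeLevel h χ (-1) = χ (-1) := by
  simpa using changeLevel_eq_cast_of_dvd' χ h (a := -1) isCoprime_one_left.neg_left

lemma changeLevel_mul_changeLevel_apply_natCast (ξ : DirichletCharacter R k)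
    (ψ : DirichletCharacter R l) (n : ℕ) :
    (changeLevel (dvd_mul_right k l) ξ * changeLevel (dvd_mul_left l k) ψ) n = ξ n * ψ n := by
  rw [MulChar.mul_apply]
  by_cases h : n.Coprime (k * l)
  · rw [changeLevel_apply_natCast_of_coprime _ _ h, changeLevel_apply_natCast_of_coprime _ _ h]
  · have hn : ¬IsUnit (n : ZMod (k * l)) := by rwa [ZMod.isUnit_iff_coprime]
    rw [MulChar.map_nonunit _ hn, MulChar.map_nonunit _ hn, mul_zero]
    rw [Nat.coprime_mul_iff_right, not_and_or, ← ZMod.isUnit_iff_coprime,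
      ← ZMod.isUnit_iff_coprime] at h
    rcases h with h | h
    · rw [ξ.map_nonunit h, zero_mul]
    · rw [ψ.map_nonunit h, mul_zero]

lemma changeLevel_mul_changeLevel_sq {ξ : DirichletCharacter R k} {ψ : DirichletCharacter R l}
    (hξ : ξ ^ 2 = 1) (hψ : ψ ^ 2 = 1) :
    (changeLevel (dvd_mul_right k l) ξ * changeLevel (dvd_mul_left l k) ψ) ^ 2 = 1 := by
  rw [mul_pow, ← map_pow, ← map_pow, hξ, hψ, map_one, map_one, one_mul]

lemma IsPrimitive.ne_one [Nontrivial R] {q : ℕ} {χ : DirichletCharacter R q}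
    (hχ : χ.IsPrimitive) (hq : 1 < q) : χ ≠ 1 := by
  have : NeZero q := ⟨by omega⟩
  rintro rfl
  exact hq.ne (conductor_one.symm.trans hχ)

lemma IsPrimitive.eq_of_factorsThrough [NeZero k] {ξ : DirichletCharacter R k}
    (hξ : ξ.IsPrimitive) {g : ℕ} (h : ξ.FactorsThrough g) : g = k :=
  le_antisymm (Nat.le_of_dvd (Nat.pos_of_neZero k) h.dvd) (hξ ▸ Nat.sInf_le h)

/-- A unit `x` mod `k` with `x ≡ 1 mod gcd(d, k)` lifts by the Chinese remainder theorem to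
`z ≡ x mod k`, `z ≡ 1 mod l`, and then `z ≡ 1 mod d`. -/
lemma factorsThrough_gcd_of_mul_eq_one [NeZero k] (hkl : k.Coprime l) {d : ℕ} (hd : d ∣ k * l)
    (ξ : DirichletCharacter R k) (ψ : DirichletCharacter R l)
    (H : ∀ z : ℕ, z.Coprime (k * l) → z ≡ 1 [MOD d] → ξ z * ψ z = 1) :
    ξ.FactorsThrough (d.gcd k) := by
  refine (factorsThrough_iff_ker_unitsMap (d.gcd_dvd_right k)).mpr fun x hx ↦
    MonoidHom.mem_ker.mpr ?_
  rw [Units.ext_iff, MulChar.coe_toUnitHom, Units.val_one]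
  have hx1 : x.val.val ≡ 1 [MOD d.gcd k] := by
    rwa [MonoidHom.mem_ker, Units.ext_iff, ZMod.unitsMap_val, ← ZMod.natCast_val,
      Units.val_one, ← Nat.cast_one, ZMod.natCast_eq_natCast_iff] at hx
  obtain ⟨z, hzk, hzl⟩ := Nat.chineseRemainder hkl x.val.val 1
  have hzx : (z : ZMod k) = x := by
    rw [(ZMod.natCast_eq_natCast_iff _ _ _).mpr hzk, ZMod.natCast_val, ZMod.cast_id]
  have hz1 : (z : ZMod l) = 1 := by
    rw [(ZMod.natCast_eq_natCast_iff _ _ _).mpr hzl, Nat.cast_one]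
  have hzd : z ≡ 1 [MOD d] := by
    have hdvd : d ∣ d.gcd k * l := by
      rw [← Nat.gcd_mul_right]; exact Nat.dvd_gcd (dvd_mul_right d l) hd
    refine Nat.ModEq.of_dvd hdvd <| (Nat.modEq_and_modEq_iff_modEq_mul
      (hkl.coprime_dvd_left (d.gcd_dvd_right k))).mp ⟨?_, hzl⟩
    exact (Nat.ModEq.of_dvd (d.gcd_dvd_right k) hzk).trans hx1
  have hz : z.Coprime (k * l) := Nat.Coprime.mul_right
    ((ZMod.isUnit_iff_coprime _ _).mp (hzx ▸ x.isUnit))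
    ((ZMod.isUnit_iff_coprime _ _).mp (hz1 ▸ isUnit_one))
  simpa [hzx, hz1] using H z hz hzd

theorem isPrimitive_changeLevel_mul_changeLevel [NeZero k] [NeZero l] (hkl : k.Coprime l)
    {ξ : DirichletCharacter R k} {ψ : DirichletCharacter R l} (hξ : ξ.IsPrimitive)
    (hψ : ψ.IsPrimitive) :
    (changeLevel (dvd_mul_right k l) ξ * changeLevel (dvd_mul_left l k) ψ).IsPrimitive := by
  set χ := changeLevel (dvd_mul_right k l) ξ * changeLevel (dvd_mul_left l k) ψ
  obtain ⟨hd, χ₀, hχ₀⟩ := factorsThrough_conductor χ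
  have H : ∀ z : ℕ, z.Coprime (k * l) → z ≡ 1 [MOD χ.conductor] → ξ z * ψ z = 1 := by
    intro z hz hz1
    rw [← changeLevel_mul_changeLevel_apply_natCast]
    change χ z = 1
    rw [hχ₀, changeLevel_apply_natCast_of_coprime _ _ hz,
      (ZMod.natCast_eq_natCast_iff _ _ _).mpr hz1, Nat.cast_one, map_one]
  have hk := hξ.eq_of_factorsThrough (factorsThrough_gcd_of_mul_eq_one hkl hd ξ ψ H)
  have hl := hψ.eq_of_factorsThrough (factorsThrough_gcd_of_mul_eq_one hkl.symm
    (mul_comm k l ▸ hd) ψ ξ fun z hz hz1 ↦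
      mul_comm (ψ z) (ξ z) ▸ H z (mul_comm l k ▸ hz) hz1)
  exact Nat.dvd_antisymm hd <| hkl.mul_dvd_of_dvd_of_dvd
    (Nat.gcd_eq_right_iff_dvd.mp hk) (Nat.gcd_eq_right_iff_dvd.mp hl)

end CommMonoidWithZero

lemma Odd.even_changeLevel_mul_changeLevel {R : Type*} [CommRing R] {k l : ℕ}
    {ξ : DirichletCharacter R k} {ψ : DirichletCharacter R l} (hξ : ξ.Odd) (hψ : ψ.Odd) :
    (changeLevel (dvd_mul_right k l) ξ * changeLevel (dvd_mul_left l k) ψ).Even := by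
  rw [Even, MulChar.mul_apply, changeLevel_apply_neg_one, changeLevel_apply_neg_one, hξ, hψ,
    neg_mul_neg, one_mul]

theorem sum_Icc_eq_sum_Icc_mod {R : Type*} [CommRing R] [IsDomain R] {q : ℕ} [NeZero q]
    {χ : DirichletCharacter R q} (hχ : χ ≠ 1) (m : ℕ) :
    ∑ n ∈ Icc 1 m, χ n = ∑ n ∈ Icc 1 (m % q), χ n := by
  have hshift (a : ℕ) :
      ∑ n ∈ Icc 1 a, χ n = ∑ n ∈ range a, χ ((n + 1 : ℕ) : ZMod q) := by
    rw [range_eq_Ico, sum_Ico_add' (fun n : ℕ ↦ χ n), ← Finset.Ico_add_one_right_eq_Icc]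
  have hper : Function.Periodic (fun n : ℕ ↦ χ ((n + 1 : ℕ) : ZMod q)) q := fun n ↦ by
    simp [add_right_comm n q 1]
  have hsum : ∑ n ∈ range q, χ ((n + 1 : ℕ) : ZMod q) = 0 := by
    simp only [Nat.cast_succ]
    rw [ZMod.sum_range_natCast q (fun x ↦ χ (x + 1)),
      Fintype.sum_equiv (Equiv.addRight 1) (fun x ↦ χ (x + 1)) χ fun _ ↦ rfl,
      MulChar.sum_eq_zero_of_ne_one hχ]
  rw [hshift, hshift, hper.sum_range_mod hsum]

theorem abs_sum_Icc_le {q : ℕ} (χ : DirichletCharacter ℝ q) (T : ℕ) :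
    |∑ n ∈ Icc 1 T, χ n| ≤ T := by
  refine (abs_sum_le_sum_abs _ _).trans ?_
  simpa using sum_le_sum fun n (_ : n ∈ Icc 1 T) ↦ χ.norm_le_one n

/-- The witness is `T = ⌊t⌋ mod q`, using periodicity and `|S_χ(T)| ≤ T`. -/
theorem exists_lt_le_abs_sum_Icc {q : ℕ} [NeZero q] {χ : DirichletCharacter ℝ q}
    (hχ : χ ≠ 1) {c t : ℝ} (hc : 0 ≤ c) (ht : 0 ≤ t)
    (hS : c * t ≤ |∑ n ∈ Icc 1 ⌊t⌋₊, χ n|) :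
    ∃ T < q, c * t ≤ T ∧ c * T ≤ |∑ n ∈ Icc 1 T, χ n| := by
  rw [sum_Icc_eq_sum_Icc_mod hχ] at hS
  refine ⟨⌊t⌋₊ % q, Nat.mod_lt _ (Nat.pos_of_neZero q), hS.trans (abs_sum_Icc_le χ _),
    le_trans ?_ hS⟩
  gcongr
  exact (Nat.cast_le.mpr (Nat.mod_le _ _)).trans (Nat.floor_le ht)

end DirichletCharacter

noncomputable def realChi4 : DirichletCharacter ℝ 4 :=
  ZMod.χ₄.ringHomComp (Int.castRingHom ℝ)

lemma realChi4_odd : realChi4.Odd := by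
  change ((ZMod.χ₄ (-1) : ℤ) : ℝ) = -1
  rw [show ZMod.χ₄ (-1) = -1 by decide]
  norm_num

lemma realChi4_sq : realChi4 ^ 2 = 1 :=
  (ZMod.isQuadratic_χ₄.comp _).sq_eq_one

/-- `-1` is trivial mod `2` but `realChi4 (-1) = -1`, so `realChi4` does not factor through `2`. -/
lemma realChi4_isPrimitive : realChi4.IsPrimitive := by
  have h2 : ¬realChi4.FactorsThrough 2 := fun h ↦ by
    have := (factorsThrough_iff_ker_unitsMap (by norm_num : 2 ∣ 4)).mp h
      (x := -1) (Units.ext (by decide))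
    rw [MonoidHom.mem_ker, Units.ext_iff, MulChar.coe_toUnitHom, Units.val_neg, Units.val_one,
      realChi4_odd, Units.val_one] at this
    norm_num at this
  have : realChi4.conductor ∈ Nat.divisors 4 := by simp [conductor_dvd_level]
  rw [show Nat.divisors 4 = {1, 2, 4} by decide] at this
  simp only [mem_insert, mem_singleton] at this
  rcases this with h | h | h
  · exact absurd (FactorsThrough.mono _ (h ▸ factorsThrough_conductor realChi4)
      (by norm_num) (by norm_num)) h2
  · exact absurd (h ▸ factorsThrough_conductor realChi4) h2
  · exact h

theorem sum_Icc_div_eq_sum_filter_coprime_two_add {f : ℕ → ℝ}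
    (hf : ∀ m, f (2 * m) = f 2 * f m) (N : ℕ) :
    ∑ n ∈ Icc 1 N, f n / n =
      ∑ n ∈ (Icc 1 N).filter (·.Coprime 2), f n / n +
        f 2 / 2 * ∑ m ∈ Icc 1 (N / 2), f m / m := by
  rw [← sum_filter_add_sum_filter_not (Icc 1 N) (·.Coprime 2), mul_sum]
  congr 1
  refine sum_nbij' (· / 2) (2 * ·) ?_ ?_ ?_ ?_ ?_ <;>
    simp only [mem_filter, mem_Icc, Nat.coprime_two_right, Nat.odd_iff, and_imp]
  any_goals omega
  intro n _ _ hn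
  obtain ⟨k, rfl⟩ : 2 ∣ n := by omega
  rw [Nat.mul_div_cancel_left k two_pos, hf]
  push_cast
  field_simp

theorem abs_sum_Icc_div_le_two_mul {f : ℕ → ℝ} (hf : ∀ m, f (2 * m) = f 2 * f m)
    (hf2 : |f 2| ≤ 1) {B : ℕ} {M : ℝ} (hM0 : 0 ≤ M)
    (hM : ∀ T ∈ Icc 1 B, |∑ n ∈ (Icc 1 T).filter (·.Coprime 2), f n / n| ≤ M) :
    ∀ N ≤ B, |∑ n ∈ Icc 1 N, f n / n| ≤ 2 * M := by
  intro N
  induction N using Nat.strong_induction_on with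
  | _ N ih =>
    intro hN
    rcases N.eq_zero_or_pos with rfl | hpos
    · simpa using hM0
    have hhalf := ih (N / 2) (Nat.div_lt_self hpos one_lt_two) ((Nat.div_le_self N 2).trans hN)
    have h2 : |f 2 / 2| ≤ 1 / 2 := by rw [abs_div, abs_two]; linarith
    rw [sum_Icc_div_eq_sum_filter_coprime_two_add hf]
    calc _ ≤ _ + |f 2 / 2| * |∑ m ∈ Icc 1 (N / 2), f m / m| :=
          (abs_add_le _ _).trans_eq (by rw [abs_mul])
      _ ≤ M + 1 / 2 * (2 * M) := add_le_add (hM N (mem_Icc.mpr ⟨hpos, hN⟩))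
          (mul_le_mul h2 hhalf (abs_nonneg _) (by norm_num))
      _ = 2 * M := by ring

/-! Hypotheses (i), (ii) and (iii) of the theorem, for fixed values of their outer parameters. -/

def SmallEvenQuadraticCharSums (ε' : ℝ) (q : ℕ) : Prop :=
  ∀ χ : DirichletCharacter ℝ q, χ.IsPrimitive → χ ^ 2 = 1 → χ.Even →
    ∀ N : ℕ, N ≤ q → |∑ n ∈ Icc 1 N, χ (n : ZMod q)| ≤ ε' * √q * log q

def MeanToLogMean (c δ x₀ : ℝ) : Prop :=
  ∀ f : ℕ → ℝ, f 1 = 1 → (∀ m n : ℕ, f (m * n) = f m * f n) →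
    (∀ n : ℕ, f n ∈ Set.Icc (-1 : ℝ) 1) → ∀ x : ℝ, x > x₀ →
      |(1 / x) * ∑ n ∈ Icc 1 ⌊x⌋₊, f n| ≥ c →
      (1 / log x) * ∑ n ∈ Icc 1 ⌊x⌋₊, f n / (n : ℝ) ≥ δ

def CharSumLowerBound (C : ℝ) : Prop :=
  ∀ (k l : ℕ), 0 < k → 0 < l → Nat.Coprime k l →
    ∀ (ξ : DirichletCharacter ℝ k) (ψ : DirichletCharacter ℝ l),
      ξ.IsPrimitive → ψ.IsPrimitive → ξ.Odd → ψ.Odd →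
      ∀ χ : DirichletCharacter ℝ (k * l),
        (∀ n : ℕ, χ (n : ZMod (k * l)) = ξ (n : ZMod k) * ψ (n : ZMod l)) →
        (1 / √(k * l)) * (⨆ N ∈ Icc 1 (k * l), |∑ n ∈ Icc 1 N, χ (n : ZMod (k * l))|) ≥
          (√l / (π * (Nat.totient l : ℝ))) *
            (⨆ t ∈ Icc 1 (k * l),
              |∑ n ∈ (Icc 1 t).filter (·.Coprime l), ξ (n : ZMod k) / (n : ℝ)|) - C

theorem MeanToLogMean.mul_log_le {c δ x₀ : ℝ} (hB : MeanToLogMean c δ x₀) {q : ℕ}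
    (χ : DirichletCharacter ℝ q) (hx₀ : 1 ≤ x₀) {T : ℕ} (hT : x₀ < T)
    (hS : c * T ≤ |∑ n ∈ Icc 1 T, χ n|) : δ * log T ≤ ∑ n ∈ Icc 1 T, χ n / n := by
  have hT0 : (0 : ℝ) < T := by linarith
  have hlog : 0 < log T := log_pos (by linarith)
  have hmean : |(1 / (T : ℝ)) * ∑ n ∈ Icc 1 ⌊(T : ℝ)⌋₊, χ n| ≥ c := by
    rwa [Nat.floor_natCast, abs_mul, abs_of_pos (by positivity), one_div_mul_eq_div, ge_iff_le,
      le_div_iff₀ hT0]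
  have h := hB (fun n ↦ χ n) (by simp) (fun m n ↦ by simp)
    (fun n ↦ abs_le.mp (χ.norm_le_one n)) T hT hmean
  rwa [Nat.floor_natCast, one_div_mul_eq_div, ge_iff_le, le_div_iff₀ hlog] at h

theorem CharSumLowerBound.iSup_abs_sum_filter_coprime_four_le {C ε' : ℝ}
    (h21 : CharSumLowerBound C) {p : ℕ} (hp : p.Prime) (hp2 : p ≠ 2)
    {ξ : DirichletCharacter ℝ p} (hprim : ξ.IsPrimitive) (hsq : ξ ^ 2 = 1) (hodd : ξ.Odd)
    (hPV : SmallEvenQuadraticCharSums ε' (p * 4)) :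
    (⨆ t ∈ Icc 1 (p * 4), |∑ n ∈ (Icc 1 t).filter (·.Coprime 4), ξ n / (n : ℝ)|) ≤
      π * (C + ε' * log (p * 4 : ℕ)) := by
  have : NeZero p := ⟨hp.ne_zero⟩
  have hcop : p.Coprime 4 := ((Nat.coprime_primes hp Nat.prime_two).mpr hp2).pow_right 2
  set χ := changeLevel (dvd_mul_right p 4) ξ * changeLevel (dvd_mul_left 4 p) realChi4
  have hχ := hPV χ (isPrimitive_changeLevel_mul_changeLevel hcop hprim realChi4_isPrimitive)
    (changeLevel_mul_changeLevel_sq hsq realChi4_sq)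
    (hodd.even_changeLevel_mul_changeLevel realChi4_odd)
  have hbound : 0 ≤ ε' * √(p * 4 : ℕ) * log (p * 4 : ℕ) :=
    (abs_nonneg _).trans (hχ 0 (Nat.zero_le _))
  have hsup :
      (⨆ N ∈ Icc 1 (p * 4), |∑ n ∈ Icc 1 N, χ n|) ≤ ε' * √(p * 4 : ℕ) * log (p * 4 : ℕ) :=
    Real.iSup_le (fun N ↦ Real.iSup_le (fun hN ↦ hχ N (mem_Icc.mp hN).2) hbound) hbound
  have h := h21 p 4 hp.pos four_pos hcop ξ realChi4 hprim realChi4_isPrimitive hodd realChi4_odd χ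
    (changeLevel_mul_changeLevel_apply_natCast ξ realChi4)
  have hcoef : √((4 : ℕ) : ℝ) / (π * (Nat.totient 4 : ℝ)) = π⁻¹ := by
    rw [show Nat.totient 4 = 2 by decide, show ((4 : ℕ) : ℝ) = 2 ^ 2 by norm_num,
      sqrt_sq zero_le_two, Nat.cast_ofNat]
    field_simp
  rw [hcoef, ← Nat.cast_mul] at h
  have hq : 0 < √((p * 4 : ℕ) : ℝ) := sqrt_pos.mpr (by have := hp.pos; positivity)
  refine (inv_mul_le_iff₀ pi_pos).mp ?_
  calc _ ≤ 1 / √((p * 4 : ℕ) : ℝ) * (ε' * √(p * 4 : ℕ) * log (p * 4 : ℕ)) + C := by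
        linarith [mul_le_mul_of_nonneg_left hsup (one_div_nonneg.mpr hq.le)]
    _ = C + ε' * log (p * 4 : ℕ) := by field_simp; ring

theorem CharSumLowerBound.abs_sum_Icc_div_le {C ε' : ℝ} (h21 : CharSumLowerBound C) {p : ℕ}
    (hp : p.Prime) (hp2 : p ≠ 2) {ξ : DirichletCharacter ℝ p} (hprim : ξ.IsPrimitive)
    (hsq : ξ ^ 2 = 1) (hodd : ξ.Odd) (hPV : SmallEvenQuadraticCharSums ε' (p * 4)) {N : ℕ}
    (hN : N ≤ p * 4) :
    |∑ n ∈ Icc 1 N, ξ n / (n : ℝ)| ≤ 2 * (π * (C + ε' * log (p * 4 : ℕ))) := by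
  set M := ⨆ t ∈ Icc 1 (p * 4), |∑ n ∈ (Icc 1 t).filter (·.Coprime 4), ξ n / (n : ℝ)|
  have hM :
      ∀ t ∈ Icc 1 (p * 4), |∑ n ∈ (Icc 1 t).filter (·.Coprime 2), ξ n / (n : ℝ)| ≤ M :=
    fun t ht ↦ by
      have hfilter : (Icc 1 t).filter (·.Coprime 2) = (Icc 1 t).filter (·.Coprime 4) :=
        filter_congr fun n _ ↦ by rw [show 4 = 2 ^ 2 from rfl, Nat.coprime_pow_right_iff two_pos]
      rw [hfilter]
      exact le_ciSup_of_mem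
        (f := fun t : ℕ ↦ |∑ n ∈ (Icc 1 t).filter (·.Coprime 4), ξ n / (n : ℝ)|) ht
        (by rw [Real.sSup_empty]; positivity)
  have hM0 : 0 ≤ M :=
    (abs_nonneg _).trans (hM 1 (mem_Icc.mpr ⟨le_rfl, by have := hp.pos; omega⟩))
  refine (abs_sum_Icc_div_le_two_mul (fun m ↦ by push_cast; exact map_mul ξ _ _)
    (by simpa using ξ.norm_le_one 2) hM0 hM N hN).trans ?_
  gcongr
  exact h21.iSup_abs_sum_filter_coprime_four_le hp hp2 hprim hsq hodd hPV

theorem abs_sum_Icc_floor_lt_mul {c δ x₀ C ε : ℝ} (hc : 0 < c) (hδ : 0 < δ) (hε : 0 < ε)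
    (hx₀ : 1 ≤ x₀) (hB : MeanToLogMean c δ x₀) (h21 : CharSumLowerBound C) {p : ℕ}
    (hp : p.Prime) (hp4 : 4 ≤ p) (hPV : SmallEvenQuadraticCharSums (δ * ε / (8 * π)) (p * 4))
    (hx₀p : x₀ < c * (p : ℝ) ^ ε) (hlogp : 2 * π * C - δ * log c < δ * ε / 2 * log p)
    {ξ : DirichletCharacter ℝ p} (hprim : ξ.IsPrimitive) (hsq : ξ ^ 2 = 1) (hodd : ξ.Odd)
    {t : ℝ} (ht : (p : ℝ) ^ ε < t) :
    |∑ n ∈ Icc 1 ⌊t⌋₊, ξ n| < c * t := by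
  have : NeZero p := ⟨hp.ne_zero⟩
  have hpε : 0 < (p : ℝ) ^ ε := by positivity
  by_contra! hS
  obtain ⟨T, hTp, hcT, hST⟩ :=
    exists_lt_le_abs_sum_Icc (hprim.ne_one hp.one_lt) hc.le (hpε.trans ht).le hS
  have hTε : c * (p : ℝ) ^ ε < T := (mul_lt_mul_of_pos_left ht hc).trans_le hcT
  have hlow : δ * (log c + ε * log p) ≤ ∑ n ∈ Icc 1 T, ξ n / n :=
    (mul_le_mul_of_nonneg_left
      (log_add_mul_log_le_log hc (Nat.cast_pos.mpr hp.pos) hTε.le) hδ.le).trans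
      (hB.mul_log_le ξ hx₀ (hx₀p.trans hTε) hST)
  have hup := h21.abs_sum_Icc_div_le hp (by omega) hprim hsq hodd hPV (N := T) (by omega)
  have hlog4 : log (p * 4 : ℕ) ≤ 2 * log p := by
    push_cast
    exact log_mul_le_two_mul_log four_pos (by exact_mod_cast hp4)
  have hcoef : 2 * (π * (C + δ * ε / (8 * π) * log (p * 4 : ℕ))) =
      2 * π * C + δ * ε / 4 * log (p * 4 : ℕ) := by
    field_simp; ring
  linarith [le_abs_self (∑ n ∈ Icc 1 T, ξ n / (n : ℝ)),
    mul_le_mul_of_nonneg_left hlog4 (by positivity : 0 ≤ δ * ε / 4)]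

/-- **Theorem A.** Assuming (i) an `o(√q log q)` improvement of
Pólya–Vinogradov for even primitive quadratic characters, (ii) Lemma B, and (iii) the lower
bound of Lemma 2.1, every odd primitive quadratic character `ξ mod p` satisfies
`|S_ξ(t)| < c·t` for all `t > p^ε`, once `p` is sufficiently large. -/
theorem burgess_improvement_from_PV
    -- (i) improved Pólya–Vinogradov for even primitive quadratic characters
    (hPV : ∀ ε' : ℝ, 0 < ε' → ∃ Q : ℕ, ∀ q : ℕ, q > Q →
      ∀ χ : DirichletCharacter ℝ q, χ.IsPrimitive → χ ^ 2 = 1 → χ.Even →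
        ∀ N : ℕ, N ≤ q →
          |∑ n ∈ Finset.Icc 1 N, χ (n : ZMod q)| ≤ ε' * Real.sqrt q * Real.log q)
    -- (ii) Lemma B
    (hLemB : ∀ c : ℝ, 0 < c → ∃ δ : ℝ, 0 < δ ∧ ∃ x₀ : ℝ, 1 ≤ x₀ ∧
      ∀ f : ℕ → ℝ,
        f 1 = 1 → (∀ m n : ℕ, f (m * n) = f m * f n) →
        (∀ n : ℕ, f n ∈ Set.Icc (-1 : ℝ) 1) →
        ∀ x : ℝ, x > x₀ →
          |(1 / x) * ∑ n ∈ Finset.Icc 1 ⌊x⌋₊, f n| ≥ c →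
          (1 / Real.log x) * ∑ n ∈ Finset.Icc 1 ⌊x⌋₊, f n / (n : ℝ) ≥ δ)
    -- (iii) Lemma 2.1
    (hLem21 : ∃ C : ℝ, ∀ (k l : ℕ), 0 < k → 0 < l → Nat.Coprime k l →
      ∀ (ξ : DirichletCharacter ℝ k) (ψ : DirichletCharacter ℝ l),
        ξ.IsPrimitive → ψ.IsPrimitive → ξ.Odd → ψ.Odd →
        ∀ χ : DirichletCharacter ℝ (k * l),
          (∀ n : ℕ, χ (n : ZMod (k * l)) = ξ (n : ZMod k) * ψ (n : ZMod l)) →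
          (1 / Real.sqrt (k * l)) *
              (⨆ N ∈ Finset.Icc 1 (k * l),
                |∑ n ∈ Finset.Icc 1 N, χ (n : ZMod (k * l))|) ≥
            (Real.sqrt l / (Real.pi * (Nat.totient l : ℝ))) *
              (⨆ t ∈ Finset.Icc 1 (k * l),
                |∑ n ∈ (Finset.Icc 1 t).filter (fun n => Nat.Coprime n l),
                  ξ (n : ZMod k) / (n : ℝ)|) - C) :
    ∀ ε c : ℝ, 0 < ε → 0 < c → ∃ P : ℕ, ∀ p : ℕ, p.Prime → p > P →
      ∀ ξ : DirichletCharacter ℝ p, ξ.IsPrimitive → ξ ^ 2 = 1 → ξ.Odd →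
        ∀ t : ℝ, t > (p : ℝ) ^ ε →
          |∑ n ∈ Finset.Icc 1 ⌊t⌋₊, ξ (n : ZMod p)| < c * t := by
  intro ε c hε hc
  obtain ⟨δ, hδ, x₀, hx₀, hB⟩ := hLemB c hc
  obtain ⟨C, h21⟩ := hLem21
  obtain ⟨Q, hQ⟩ := hPV (δ * ε / (8 * π)) (by positivity)
  have hlarge : ∀ᶠ p : ℕ in atTop, Q < p ∧ 4 ≤ p ∧ x₀ < c * (p : ℝ) ^ ε ∧
      2 * π * C - δ * log c < δ * ε / 2 * log p :=
    (eventually_gt_atTop Q).and <| (eventually_ge_atTop 4).and <|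
      ((((tendsto_rpow_atTop hε).comp tendsto_natCast_atTop_atTop).const_mul_atTop
        hc).eventually_gt_atTop x₀).and
      (((tendsto_log_atTop.comp tendsto_natCast_atTop_atTop).const_mul_atTop
        (by positivity)).eventually_gt_atTop _)
  obtain ⟨P, hP⟩ := eventually_atTop.mp hlarge
  refine ⟨P, fun p hp hpP ξ hprim hsq hodd t ht ↦ ?_⟩
  obtain ⟨hQp, hp4, hx₀p, hlogp⟩ := hP p hpP.le
  exact abs_sum_Icc_floor_lt_mul hc hδ hε hx₀ hB h21 hp hp4 (hQ _ (by omega)) hx₀p hlogp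
    hprim hsq hodd ht
end

section
/- Let ξ be an odd primitive quadratic character mod a prime p, let δ > 0, ε > 0, and let ℓ ≡ 3 (mod 4) be a prime with ℓ > 2/δ. Suppose t ≤ p is a real number with t > p^ε and (1/log t) ∑_{n ≤ t} ξ(n)/n ≥ δ. Then for p sufficiently large (in terms of δ, ε, ℓ), ∑_{n ≤ t, ℓ ∤ n} ξ(n)/n ≥ (δε/4) log(pℓ). -/
/-!
The multiples of `ℓ` contribute at most `(1/ℓ) ∑_{m ≤ t/ℓ} 1/m ≤ (1 + log t)/ℓ` in absolute value.
As `1/ℓ < δ/2`, what remains is at least `(δ/2) log t - 1 > (δε/2) log p - 1`, and this exceeds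
`(δε/4) log (pℓ)` as soon as `p > ℓ e^{4/(δε)}`.
-/

open DirichletCharacter Finset

lemma Nat.Icc_filter_dvd_eq_image {ℓ : ℕ} (hℓ : 0 < ℓ) (N : ℕ) :
    {n ∈ Icc 1 N | ℓ ∣ n} = (Icc 1 (N / ℓ)).image (ℓ * ·) := by
  ext n
  simp only [mem_filter, mem_Icc, mem_image, Nat.le_div_iff_mul_le hℓ]
  constructor
  · rintro ⟨⟨h1, hN⟩, m, rfl⟩
    exact ⟨m, ⟨Nat.pos_of_mul_pos_left h1, by rwa [mul_comm]⟩, rfl⟩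
  · rintro ⟨m, ⟨h1, hN⟩, rfl⟩
    exact ⟨⟨Nat.mul_pos hℓ h1, by rwa [mul_comm]⟩, dvd_mul_right ℓ m⟩

lemma Nat.sum_Icc_filter_dvd {M : Type*} [AddCommMonoid M] {ℓ : ℕ} (hℓ : 0 < ℓ) (N : ℕ)
    (f : ℕ → M) : ∑ n ∈ Icc 1 N with ℓ ∣ n, f n = ∑ m ∈ Icc 1 (N / ℓ), f (ℓ * m) := by
  rw [Nat.Icc_filter_dvd_eq_image hℓ,
    sum_image fun _ _ _ _ h => Nat.eq_of_mul_eq_mul_left hℓ h]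

lemma abs_sum_Icc_filter_dvd_div_le {f : ℕ → ℝ} (hf : ∀ n, |f n| ≤ 1) {ℓ : ℕ} (hℓ : 0 < ℓ)
    (N : ℕ) : |∑ n ∈ Icc 1 N with ℓ ∣ n, f n / n| ≤ (1 + Real.log N) / ℓ := by
  have hlog : Real.log (N / ℓ : ℕ) ≤ Real.log N := by
    rcases (N / ℓ).eq_zero_or_pos with h | h
    · simpa [h] using Real.log_natCast_nonneg N
    · exact Real.log_le_log (by exact_mod_cast h) (by exact_mod_cast N.div_le_self ℓ)
  calc |∑ n ∈ Icc 1 N with ℓ ∣ n, f n / n|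
      ≤ ∑ m ∈ Icc 1 (N / ℓ), 1 / ((ℓ * m : ℕ) : ℝ) := by
        rw [Nat.sum_Icc_filter_dvd hℓ]
        refine (abs_sum_le_sum_abs _ _).trans (sum_le_sum fun m _ => ?_)
        rw [abs_div, Nat.abs_cast]
        gcongr
        exact hf _
    _ = harmonic (N / ℓ) / ℓ := by
        rw [harmonic_eq_sum_Icc, Rat.cast_sum, sum_div]
        refine sum_congr rfl fun m _ => ?_
        push_cast
        ring
    _ ≤ (1 + Real.log N) / ℓ := by
        gcongr
        exact (harmonic_le_one_add_log _).trans (by linarith)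

lemma sub_le_sum_Icc_floor_filter_not_dvd_div {f : ℕ → ℝ} (hf : ∀ n, |f n| ≤ 1) {ℓ : ℕ}
    (hℓ : 0 < ℓ) {t : ℝ} (ht : 1 ≤ t) :
    ∑ n ∈ Icc 1 ⌊t⌋₊, f n / n - (1 + Real.log t) / ℓ ≤
      ∑ n ∈ Icc 1 ⌊t⌋₊ with ¬ ℓ ∣ n, f n / n := by
  have hlog : Real.log ⌊t⌋₊ ≤ Real.log t :=
    Real.log_le_log (Nat.cast_pos.2 (Nat.floor_pos.2 ht)) (Nat.floor_le (by linarith))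
  have hremoved : (1 + Real.log ⌊t⌋₊) / ℓ ≤ (1 + Real.log t) / ℓ := by gcongr
  rw [← sum_filter_add_sum_filter_not (Icc 1 ⌊t⌋₊) (ℓ ∣ ·)]
  linarith [(abs_le.1 (abs_sum_Icc_filter_dvd_div_le hf hℓ ⌊t⌋₊)).2]

lemma mul_add_log_le_mul_sub_div {δ ε ℓ Lp L : ℝ} (hδ : 0 < δ) (hε : 0 < ε) (hℓ : 1 ≤ ℓ)
    (hℓδ : 2 / δ < ℓ) (hLp : Real.log ℓ + 4 / (δ * ε) < Lp) (hL : ε * Lp < L) :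
    δ * ε / 4 * (Lp + Real.log ℓ) ≤ δ * L - (1 + L) / ℓ := by
  have hℓ_pos : 0 < ℓ := by linarith
  have hℓ_inv : 1 / ℓ < δ / 2 := (one_div_lt hℓ_pos (half_pos hδ)).2 (by rwa [one_div_div])
  have hℓ_inv_le : 1 / ℓ ≤ 1 := div_le_one_of_le₀ hℓ hℓ_pos.le
  have hlogℓ : 0 ≤ Real.log ℓ := Real.log_nonneg hℓ
  have hLp_pos : 0 < Lp := by linarith [(by positivity : 0 < 4 / (δ * ε))]
  have hmain : δ / 2 * (ε * Lp) ≤ (δ - 1 / ℓ) * L :=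
    mul_le_mul (by linarith) hL.le (by positivity) (by linarith)
  have hthreshold : δ * ε / 4 * Real.log ℓ + 1 < δ * ε / 4 * Lp := by
    have := mul_lt_mul_of_pos_left hLp (by positivity : 0 < δ * ε / 4)
    rwa [mul_add, show δ * ε / 4 * (4 / (δ * ε)) = 1 by field_simp] at this
  have hsplit : δ * L - (1 + L) / ℓ = (δ - 1 / ℓ) * L - 1 / ℓ := by ring
  rw [hsplit]
  linarith

theorem restricted_logSum_ge_log_q_general
    (δ ε : ℝ) (hδ : 0 < δ) (hε : 0 < ε)
    (ℓ : ℕ) (hℓδ : (ℓ : ℝ) > 2 / δ) :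
    ∃ P : ℝ, ∀ p : ℕ, p.Prime → (p : ℝ) > P →
      ∀ ξ : DirichletCharacter ℝ p, ξ.IsPrimitive → ξ ^ 2 = 1 → ξ.Odd →
        ∀ t : ℝ, t ≤ (p : ℝ) → t > (p : ℝ) ^ ε →
          (1 / Real.log t) * ∑ n ∈ Finset.Icc 1 ⌊t⌋₊, ξ (n : ZMod p) / (n : ℝ) ≥ δ →
          (∑ n ∈ (Finset.Icc 1 ⌊t⌋₊).filter (fun n => ¬ ℓ ∣ n),
              ξ (n : ZMod p) / (n : ℝ)) ≥
            δ * ε / 4 * Real.log ((p : ℝ) * (ℓ : ℝ)) := by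
  have hℓ : 0 < ℓ := Nat.cast_pos.1 ((div_pos two_pos hδ).trans hℓδ)
  have hℓ_pos : (0 : ℝ) < ℓ := Nat.cast_pos.2 hℓ
  refine ⟨ℓ * Real.exp (4 / (δ * ε)), fun p _ hpP ξ _ _ _ t _ htp hmean => ?_⟩
  have hp_pos : (0 : ℝ) < p := (by positivity : (0 : ℝ) < ℓ * Real.exp (4 / (δ * ε))).trans hpP
  have hlogp : Real.log ℓ + 4 / (δ * ε) < Real.log p := by
    simpa [Real.log_mul hℓ_pos.ne' (Real.exp_pos _).ne'] using Real.log_lt_log (by positivity) hpP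
  have hlogt : ε * Real.log p < Real.log t := by
    simpa [Real.log_rpow hp_pos] using Real.log_lt_log (by positivity) htp
  have ht_pos : 0 < t := (Real.rpow_pos_of_pos hp_pos ε).trans htp
  have hlogt_pos : 0 < Real.log t := by
    have : 0 ≤ Real.log ℓ := Real.log_natCast_nonneg ℓ
    exact (mul_pos hε (by linarith [(by positivity : 0 < 4 / (δ * ε))])).trans hlogt
  have ht : 1 ≤ t := ((Real.log_pos_iff ht_pos.le).1 hlogt_pos).le
  have hfull : δ * Real.log t ≤ ∑ n ∈ Icc 1 ⌊t⌋₊, ξ (n : ZMod p) / (n : ℝ) := by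
    rwa [ge_iff_le, one_div_mul_eq_div, le_div_iff₀ hlogt_pos] at hmean
  have hrestr := sub_le_sum_Icc_floor_filter_not_dvd_div (f := fun n => ξ n)
    (fun n => ξ.norm_le_one n) hℓ ht
  rw [Real.log_mul hp_pos.ne' hℓ_pos.ne']
  linarith [mul_add_log_le_mul_sub_div hδ hε (Nat.one_le_cast.2 hℓ) hℓδ hlogp hlogt]

/-- For an odd primitive quadratic `ξ mod p` (`p` prime), `δ, ε > 0`, a prime
`ℓ ≡ 3 (mod 4)` with `ℓ > 2/δ`, and `p^ε < t ≤ p` with `L_ξ(t) ≥ δ`: for `p` large in terms of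
`δ, ε, ℓ`, one has `∑_{n ≤ t, ℓ ∤ n} ξ(n)/n ≥ (δε/4) log(pℓ)`. -/
theorem restricted_logSum_ge_log_q
    (δ ε : ℝ) (hδ : 0 < δ) (hε : 0 < ε)
    (ℓ : ℕ) (hℓ : ℓ.Prime) (hℓ3 : ℓ % 4 = 3) (hℓδ : (ℓ : ℝ) > 2 / δ) :
    ∃ P : ℝ, ∀ p : ℕ, p.Prime → (p : ℝ) > P →
      ∀ ξ : DirichletCharacter ℝ p, ξ.IsPrimitive → ξ ^ 2 = 1 → ξ.Odd →
        ∀ t : ℝ, t ≤ (p : ℝ) → t > (p : ℝ) ^ ε →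
          (1 / Real.log t) * ∑ n ∈ Finset.Icc 1 ⌊t⌋₊, ξ (n : ZMod p) / (n : ℝ) ≥ δ →
          (∑ n ∈ (Finset.Icc 1 ⌊t⌋₊).filter (fun n => ¬ ℓ ∣ n),
              ξ (n : ZMod p) / (n : ℝ)) ≥
            δ * ε / 4 * Real.log ((p : ℝ) * (ℓ : ℝ)) :=
  restricted_logSum_ge_log_q_general δ ε hδ hε ℓ hℓδ
end
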